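/- arXiv:2103.14646 — 4 statements merged into one kernel-verified Lean document; each statement's English description precedes it below -/
import Mathlib

section
/- Let (L, v) be a valued field with valuation ring O_L and maximal ideal m_L, and let K ⊆ L be a subfield, equipped with the restricted valuation, with valuation ring O_K = O_L ∩ K and maximal ideal m_K = m_L ∩ K. Assume the extension L/K is immediate, i.e.: (i) for every x ∈ Lˣ there exists c ∈ Kˣ with v(x) = v(c); and (ii) for every x ∈ O_L there exists c ∈ O_K with x − c ∈ m_L. Then the group homomorphism Kˣ/(1 + m_K) → Lˣ/(1 + m_L) induced by the inclusion Kˣ ⊆ Lˣ is bijective. -/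
/-- The group of principal units of a valued field `(L, v)`: the subgroup of `Lˣ`
consisting of the units `u` with `v (u - 1) < 1`, i.e. the group `1 + m_v`. -/
def principalUnits {L : Type*} [Field L] {Γ₀ : Type*} [LinearOrderedCommGroupWithZero Γ₀]
    (v : Valuation L Γ₀) : Subgroup Lˣ where
  carrier := {u : Lˣ | v ((u : L) - 1) < 1}
  one_mem' := by simp
  mul_mem' := by
    intro a b ha hb
    simp only [Set.mem_setOf_eq] at *
    have hva : v (a : L) = 1 := by
      have := v.map_one_add_of_lt ha
      simpa using this
    have : ((a * b : Lˣ) : L) - 1 = (a : L) * ((b : L) - 1) + ((a : L) - 1) := by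
      rw [Units.val_mul]; ring
    rw [this]
    refine lt_of_le_of_lt (v.map_add _ _) (max_lt ?_ ha)
    rw [v.map_mul, hva, one_mul]
    exact hb
  inv_mem' := by
    intro a ha
    simp only [Set.mem_setOf_eq] at *
    have hva : v (a : L) = 1 := by
      have := v.map_one_add_of_lt ha
      simpa using this
    have ha0 : (a : L) ≠ 0 := a.ne_zero
    have : ((a⁻¹ : Lˣ) : L) - 1 = ((a : L))⁻¹ * (1 - (a : L)) := by
      rw [Units.val_inv_eq_inv_val, mul_sub, mul_one, inv_mul_cancel₀ ha0]
    rw [this, v.map_mul, map_inv₀, hva, inv_one, one_mul, ← v.map_neg, neg_sub]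
    exact ha

@[simp]
theorem mem_principalUnits {L : Type*} [Field L] {Γ₀ : Type*}
    [LinearOrderedCommGroupWithZero Γ₀] (v : Valuation L Γ₀) (u : Lˣ) :
    u ∈ principalUnits v ↔ v ((u : L) - 1) < 1 :=
  Iff.rfl

/-- The principal units of the restriction of `v` to a subfield `K` are mapped into the
principal units of `(L, v)` by the inclusion `Kˣ → Lˣ`. -/
theorem principalUnits_le_comap {L : Type*} [Field L] {Γ₀ : Type*}
    [LinearOrderedCommGroupWithZero Γ₀] (v : Valuation L Γ₀) (K : Subfield L) :
    principalUnits (v.comap K.subtype) ≤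
      Subgroup.comap (Units.map K.subtype.toMonoidHom) (principalUnits v) := by
  intro u hu
  simp only [mem_principalUnits, Subgroup.mem_comap, Valuation.comap_apply] at *
  have h1 : ((Units.map K.subtype.toMonoidHom u : Lˣ) : L) = ((u : K) : L) := rfl
  have h2 : ((u : K) : L) - 1 = ((((u : K) - 1 : K)) : L) := by push_cast; ring
  rw [h1, h2]
  exact hu

/-
Injectivity holds because the principal units of `K` are exactly the units of `K` that are
principal units of `L`. For surjectivity, given `x ∈ Lˣ` pick `c ∈ Kˣ` with `v x = v c`; then
`x / c` is a unit of the valuation ring, so it has a residue representative `d ∈ K`, necessarily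
a unit, and `v (x - c d) < v (c d)` says that `x` and `c d` have the same class in `RV(L)`.
-/

theorem QuotientGroup.map_injective_of_comap_le {G H : Type*} [Group G] [Group H]
    {N : Subgroup G} [N.Normal] {M : Subgroup H} [M.Normal] {f : G →* H}
    (h : N ≤ M.comap f) (hle : M.comap f ≤ N) : Function.Injective (QuotientGroup.map N M f h) := by
  rw [← MonoidHom.ker_eq_bot_iff, QuotientGroup.ker_map, Subgroup.map_eq_bot_iff,
    QuotientGroup.ker_mk']
  exact hle

section PrincipalUnits

variable {L : Type*} [Field L] {Γ₀ : Type*} [LinearOrderedCommGroupWithZero Γ₀]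
  (v : Valuation L Γ₀)

theorem comap_principalUnits_le {K : Type*} [Field K] (f : K →+* L) :
    (principalUnits v).comap (Units.map f.toMonoidHom) ≤ principalUnits (v.comap f) := by
  intro u hu
  simpa [Valuation.comap_apply] using hu

theorem inv_mul_mem_principalUnits_iff {a x : Lˣ} :
    a⁻¹ * x ∈ principalUnits v ↔ v ((x : L) - a) < v (a : L) := by
  have hva : v (a : L) ≠ 0 := by simp
  have : ((a⁻¹ * x : Lˣ) : L) - 1 = (a : L)⁻¹ * ((x : L) - a) := by
    rw [Units.val_mul, Units.val_inv_eq_inv_val, mul_sub, inv_mul_cancel₀ a.ne_zero]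
  rw [mem_principalUnits, this, map_mul, map_inv₀, inv_mul_lt_one₀ (zero_lt_iff.mpr hva)]

end PrincipalUnits

section Immediate

variable {L : Type*} [Field L] {Γ₀ : Type*} [LinearOrderedCommGroupWithZero Γ₀]
  {v : Valuation L Γ₀} {K : Subfield L}

theorem exists_sub_lt_of_immediate
    (hval : ∀ x : Lˣ, ∃ c : Kˣ, v (x : L) = v (((c : K) : L)))
    (hres : ∀ x : L, v x ≤ 1 → ∃ c : K, v ((c : K) : L) ≤ 1 ∧ v (x - ((c : K) : L)) < 1)
    (x : Lˣ) : ∃ a : Kˣ, v ((x : L) - ((a : K) : L)) < v ((a : K) : L) := by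
  obtain ⟨c, hc⟩ := hval x
  have hc0 : ((c : K) : L) ≠ 0 := by simp
  have hvc : 0 < v ((c : K) : L) := by simp [zero_lt_iff, hc0]
  set z : L := x / ((c : K) : L)
  have hz : v z = 1 := by rw [map_div₀, hc, div_self hvc.ne']
  obtain ⟨d, -, hzd⟩ := hres z hz.le
  have hvd : v ((d : K) : L) = 1 :=
    hz ▸ v.map_eq_of_sub_lt (by rwa [← Valuation.map_neg, neg_sub, hz])
  have hd0 : d ≠ 0 := by rintro rfl; simp at hvd
  refine ⟨c * Units.mk0 d hd0, ?_⟩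
  calc v ((x : L) - ((c : K) : L) * (d : L)) = v ((c : K) : L) * v (z - (d : L)) := by
        rw [← map_mul, mul_sub, mul_div_cancel₀ _ hc0]
    _ < v ((c : K) : L) * 1 := mul_lt_mul_of_pos_left hzd hvc
    _ = v (((c * Units.mk0 d hd0 : Kˣ) : K) : L) := by simp [hvd]

end Immediate

/-- Let `(L, v)` be a valued field and let `K ⊆ L` be a subfield
equipped with the restricted valuation.  Assume the extension `L/K` is immediate:
(i) every `x ∈ Lˣ` has the same value as some `c ∈ Kˣ`; and (ii) every element of the
valuation ring of `L` is congruent modulo the maximal ideal to an element of the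
valuation ring of `K`.  Then the group homomorphism
`Kˣ/(1 + m_K) → Lˣ/(1 + m_L)` induced by the inclusion `Kˣ ⊆ Lˣ` is bijective. -/
theorem rv_iso_of_immediate {L : Type*} [Field L] {Γ₀ : Type*}
    [LinearOrderedCommGroupWithZero Γ₀] (v : Valuation L Γ₀) (K : Subfield L)
    (hval : ∀ x : Lˣ, ∃ c : Kˣ, v (x : L) = v (((c : K) : L)))
    (hres : ∀ x : L, v x ≤ 1 → ∃ c : K, v ((c : K) : L) ≤ 1 ∧ v (x - ((c : K) : L)) < 1) :
    Function.Bijective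
      (QuotientGroup.map (principalUnits (v.comap K.subtype)) (principalUnits v)
        (Units.map K.subtype.toMonoidHom) (principalUnits_le_comap v K)) := by
  refine ⟨QuotientGroup.map_injective_of_comap_le _ (comap_principalUnits_le v K.subtype),
    fun q => QuotientGroup.induction_on q fun x => ?_⟩
  obtain ⟨a, ha⟩ := exists_sub_lt_of_immediate hval hres x
  exact ⟨a, QuotientGroup.eq.mpr ((inv_mul_mem_principalUnits_iff v).mpr ha)⟩
end

section
/- Let K be a field of characteristic p > 0 equipped with a normalized discrete valuation v (a surjective valuation v : Kˣ → ℤ), and let K̂ be the completion of K with respect to v, with extended valuation v̂. Suppose there exists α ∈ K̂ \ K with α^p ∈ K (identifying K with its image in K̂). Then the subfield K(α) ⊆ K̂ is an extension of K of degree p which is immediate over (K, v): the value group v̂(K(α)ˣ) equals v(Kˣ) = ℤ, and every element of the valuation ring of (K(α), v̂) is congruent, modulo the maximal ideal of that valuation ring, to an element of the valuation ring of (K, v). In particular, K(α)/K is a finite extension to which v extends uniquely and for which [K(α):K] = p while the residue field extension and value group extension are trivial, i.e. K(α)/K is a defect extension. -/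
open UniformSpace
open scoped IntermediateField

/-!
Every element of `K̂` can be approximated arbitrarily well by elements of `K`, so `K̂`, and with
it every intermediate field such as `K(α)`, has the same value group and residue field as `K`.
The degree is `p` because `X ^ p - α ^ p` is irreducible over `K`: its coefficient `α ^ p` is
not a `p`-th power in `K`, as Frobenius is injective on `K̂` and `α ∉ K`. Finally every
`x ∈ K(α)` has `x ^ p ∈ K`, and membership in a valuation ring is detected by `p`-th powers,
so a valuation ring of `K(α)` is determined by its trace on `K`.
-/

namespace Valued

section

variable {R : Type*} [Ring R] {Γ₀ : Type*} [LinearOrderedCommGroupWithZero Γ₀] [Valued R Γ₀]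

theorem setOf_valuation_sub_lt_mem_nhds {a : R} (ha : v a ≠ 0) (x : R) :
    {y | v (y - x) < v a} ∈ nhds x := by
  refine mem_nhds.2 ⟨Units.mk0 (v.restrict a) (by simpa using ha), fun y hy ↦ ?_⟩
  simpa [Valuation.restrict_lt_iff] using hy

end

section

variable {K : Type*} [Field K] {Γ₀ : Type*} [LinearOrderedCommGroupWithZero Γ₀] [Valued K Γ₀]

theorem exists_valuation_sub_coe_lt (x : Completion K) {a : K} (ha : a ≠ 0) :
    ∃ b : K, v (x - b) < v a := by
  have hva : v (a : Completion K) ≠ 0 := by simpa using ha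
  obtain ⟨b, hb⟩ := Completion.denseRange_coe.mem_nhds (setOf_valuation_sub_lt_mem_nhds hva x)
  exact ⟨b, by simpa [Valuation.map_sub_swap] using hb⟩

theorem exists_valuation_coe_eq (x : Completion K) (hx : x ≠ 0) :
    ∃ b : K, b ≠ 0 ∧ v (b : Completion K) = v x := by
  obtain ⟨b, hb⟩ := Completion.denseRange_coe.mem_nhds (locally_const ((map_ne_zero _).2 hx))
  refine ⟨b, ?_, hb⟩
  rintro rfl
  exact hx (by simpa using hb.symm)

theorem exists_valuation_sub_coe_lt_one (x : Completion K) (hx : v x ≤ 1) :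
    ∃ c : K, v c ≤ 1 ∧ v (x - c) < 1 := by
  obtain ⟨c, hc⟩ := exists_valuation_sub_coe_lt x one_ne_zero
  rw [map_one] at hc
  refine ⟨c, ?_, hc⟩
  rw [← valuedCompletion_apply, ← sub_sub_cancel x c]
  exact (v.map_sub _ _).trans (max_le hx hc.le)

end

end Valued

theorem ValuationSubring.pow_mem_iff {L : Type*} [Field L] (B : ValuationSubring L) {n : ℕ}
    (hn : n ≠ 0) (x : L) : x ^ n ∈ B ↔ x ∈ B := by
  rw [← B.valuation_le_one_iff, ← B.valuation_le_one_iff, map_pow, pow_le_one_iff hn]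

theorem ValuationSubring.eq_of_algebraMap_mem_iff {K L : Type*} [Field K] [Field L] [Algebra K L]
    {n : ℕ} (hn : n ≠ 0) (hpow : ∀ x : L, x ^ n ∈ Set.range (algebraMap K L))
    {B₁ B₂ : ValuationSubring L} (h : ∀ c : K, algebraMap K L c ∈ B₁ ↔ algebraMap K L c ∈ B₂) :
    B₁ = B₂ := by
  ext x
  obtain ⟨c, hc⟩ := hpow x
  rw [← B₁.pow_mem_iff hn, ← B₂.pow_mem_iff hn, ← hc, h]

section CharP

variable {K L : Type*} [Field K] [Field L] [Algebra K L] {p : ℕ} [CharP K p]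

theorem IntermediateField.pow_char_mem_range_of_mem_adjoin_simple (hp : p.Prime) {α : L}
    (hαp : α ^ p ∈ Set.range (algebraMap K L)) {x : L} (hx : x ∈ K⟮α⟯) :
    x ^ p ∈ Set.range (algebraMap K L) := by
  have : CharP L p := charP_of_injective_algebraMap' K p
  have : ExpChar L p := .prime hp
  let S : Subfield L := (⊥ : IntermediateField K L).toSubfield.comap (frobenius L p)
  have hS : K⟮α⟯.toSubfield ≤ S := by
    refine IntermediateField.adjoin_le_subfield K {α} ?_ ?_
    · rintro _ ⟨c, rfl⟩
      exact ⟨c ^ p, by simp [frobenius_def]⟩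
    · simpa [S, frobenius_def, IntermediateField.mem_bot] using hαp
  exact IntermediateField.mem_bot.1 (hS hx)


theorem IntermediateField.finrank_adjoin_simple_of_pow_char_mem_range (hp : p.Prime) {α : L}
    (hα : α ∉ Set.range (algebraMap K L)) (hαp : α ^ p ∈ Set.range (algebraMap K L)) :
    Module.finrank K K⟮α⟯ = p := by
  have : CharP L p := charP_of_injective_algebraMap' K p
  have : ExpChar L p := .prime hp
  obtain ⟨c, hc⟩ := hαp
  have hc_not_pow : ∀ b : K, b ^ p ≠ c := by
    rintro b rfl
    exact hα ⟨b, frobenius_inj L p (by simpa [frobenius_def] using hc)⟩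
  have hmonic := Polynomial.monic_X_pow_sub_C c hp.ne_zero
  have hroot : Polynomial.aeval α (Polynomial.X ^ p - Polynomial.C c) = 0 := by simp [hc]
  rw [adjoin.finrank ⟨_, hmonic, hroot⟩,
    ← minpoly.eq_of_irreducible_of_monic (X_pow_sub_C_irreducible_of_prime hp hc_not_pow) hroot
      hmonic, Polynomial.natDegree_X_pow_sub_C]

end CharP

theorem defect_extension_of_inseparable_completion_general
    (K : Type*) [Field K] (p : ℕ) (hp : p.Prime) [CharP K p]
    [vK : Valued K (WithZero (Multiplicative ℤ))]
    (α : Completion K)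
    (hα : α ∉ Set.range ((↑) : K → Completion K))
    (hαp : α ^ p ∈ Set.range ((↑) : K → Completion K)) :
    Module.finrank K K⟮α⟯ = p ∧
    -- the value group of `(K(α), v̂)` equals the value group of `(K, v)`
    {γ : WithZero (Multiplicative ℤ) | ∃ x : Completion K, x ∈ K⟮α⟯ ∧ x ≠ 0 ∧ Valued.v x = γ}
      = {γ : WithZero (Multiplicative ℤ) | ∃ c : K, c ≠ 0 ∧ Valued.v ((c : Completion K)) = γ} ∧
    -- every element of the valuation ring of `(K(α), v̂)` is congruent modulo the
    -- maximal ideal to an element of the valuation ring of `(K, v)`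
    (∀ x : Completion K, x ∈ K⟮α⟯ → Valued.v x ≤ 1 →
      ∃ c : K, Valued.v c ≤ 1 ∧ Valued.v (x - (c : Completion K)) < 1) ∧
    -- `v` extends uniquely to `K(α)`
    (∀ B₁ B₂ : ValuationSubring K⟮α⟯,
      (∀ c : K, Valued.v c ≤ 1 ↔ algebraMap K K⟮α⟯ c ∈ B₁) →
      (∀ c : K, Valued.v c ≤ 1 ↔ algebraMap K K⟮α⟯ c ∈ B₂) → B₁ = B₂) := by
  have hrange : Set.range ((↑) : K → Completion K) = Set.range (algebraMap K (Completion K)) :=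
    rfl
  rw [hrange] at hα hαp
  refine ⟨IntermediateField.finrank_adjoin_simple_of_pow_char_mem_range hp hα hαp, ?_,
    fun x _ ↦ Valued.exists_valuation_sub_coe_lt_one x, ?_⟩
  · ext γ
    constructor
    · rintro ⟨x, -, hx, rfl⟩
      exact Valued.exists_valuation_coe_eq x hx
    · rintro ⟨c, hc, rfl⟩
      exact ⟨c, K⟮α⟯.algebraMap_mem c, by simpa using hc, rfl⟩
  · intro B₁ B₂ h₁ h₂
    refine ValuationSubring.eq_of_algebraMap_mem_iff hp.ne_zero (fun x ↦ ?_)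
      fun c ↦ (h₁ c).symm.trans (h₂ c)
    obtain ⟨c, hc⟩ :=
      IntermediateField.pow_char_mem_range_of_mem_adjoin_simple hp hαp x.2
    exact ⟨c, Subtype.ext hc⟩

/-- Let `K` be a field of characteristic `p > 0` with a normalized
discrete valuation `v` (surjective onto `ℤ`), and let `K̂` be its completion with extended
valuation `v̂`.  Suppose there is `α ∈ K̂ \ K` with `α^p ∈ K`.  Then `K(α) ⊆ K̂` is an
extension of `K` of degree `p` which is immediate over `(K, v)`: the value group of
`K(α)` equals that of `K`, and every element of the valuation ring of `K(α)` is congruent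
modulo the maximal ideal to an element of the valuation ring of `K`.  Moreover `v` extends
uniquely to `K(α)`; thus `K(α)/K` is a defect extension. -/
theorem defect_extension_of_inseparable_completion
    (K : Type*) [Field K] (p : ℕ) (hp : p.Prime) [CharP K p]
    [vK : Valued K (WithZero (Multiplicative ℤ))]
    (hsurj : Function.Surjective (vK.v : K → WithZero (Multiplicative ℤ)))
    (α : Completion K)
    (hα : α ∉ Set.range ((↑) : K → Completion K))
    (hαp : α ^ p ∈ Set.range ((↑) : K → Completion K)) :
    Module.finrank K K⟮α⟯ = p ∧
    -- the value group of `(K(α), v̂)` equals the value group of `(K, v)`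
    {γ : WithZero (Multiplicative ℤ) | ∃ x : Completion K, x ∈ K⟮α⟯ ∧ x ≠ 0 ∧ Valued.v x = γ}
      = {γ : WithZero (Multiplicative ℤ) | ∃ c : K, c ≠ 0 ∧ Valued.v ((c : Completion K)) = γ} ∧
    -- every element of the valuation ring of `(K(α), v̂)` is congruent modulo the
    -- maximal ideal to an element of the valuation ring of `(K, v)`
    (∀ x : Completion K, x ∈ K⟮α⟯ → Valued.v x ≤ 1 →
      ∃ c : K, Valued.v c ≤ 1 ∧ Valued.v (x - (c : Completion K)) < 1) ∧
    -- `v` extends uniquely to `K(α)`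
    (∀ B₁ B₂ : ValuationSubring K⟮α⟯,
      (∀ c : K, Valued.v c ≤ 1 ↔ algebraMap K K⟮α⟯ c ∈ B₁) →
      (∀ c : K, Valued.v c ≤ 1 ↔ algebraMap K K⟮α⟯ c ∈ B₂) → B₁ = B₂) :=
  defect_extension_of_inseparable_completion_general K p hp (vK := vK) α hα hαp
end

section
/- Let p be a prime and let K be the field of Hahn series with coefficient field 𝔽_p and exponent group ℚ. There exists x ∈ K whose support equals {−p^{−k} : k ≥ 1} such that x^p − x = t^{−1}, where t^{−1} denotes the Hahn series with a single term of exponent −1 and coefficient 1. In particular, since the support of x lies in ℤ[1/p], the Artin–Schreier equation x^p − x = t^{−1} has a solution in the Hahn series field 𝔽_p((t^{1/p^∞})) with exponents in ℤ[1/p]. -/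
/-!
Write `e k = -p^{-k}`, so that `p • e (k + 1) = e k` and `e 0 = -1`. The solution is
`x = ∑_{k ≥ 1} t^{e k}`: since Frobenius is additive, formally `x^p = ∑_{k ≥ 0} t^{e k} = t⁻¹ + x`.
To justify this for an infinite sum, cut it into tails `T n = ∑_{k > n} t^{e k}`. From
`T n = t^{e (n + 1)} + T (n + 1)` the defect `T n ^ p - T n - t^{e n}` does not depend on `n`, while
its order is at least `e n`, which tends to `0`. As all exponents involved are negative, the
defect vanishes.
-/

open scoped Pointwise

namespace HahnSeries

variable {Γ R : Type*} [AddCommMonoid Γ] [LinearOrder Γ] [IsOrderedCancelAddMonoid Γ] [Semiring R]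

instance {p : ℕ} [ExpChar R p] : ExpChar (HahnSeries Γ R) p :=
  expChar_of_injective_ringHom C_injective p

theorem support_pow_subset_Iio {x : HahnSeries Γ R} {c : Γ} (hx : x.support ⊆ Set.Iio c)
    {n : ℕ} (hn : n ≠ 0) : (x ^ n).support ⊆ Set.Iio (n • c) := by
  induction n, Nat.one_le_iff_ne_zero.2 hn using Nat.le_induction with
  | base => simpa using hx
  | succ n hn ih =>
    calc (x ^ (n + 1)).support ⊆ (x ^ n).support + x.support := pow_succ x n ▸ support_mul_subset
      _ ⊆ Set.Iic (n • c) + Set.Iio c :=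
        Set.add_subset_add ((ih (by omega)).trans Set.Iio_subset_Iic_self) hx
      _ ⊆ Set.Iio ((n + 1) • c) := succ_nsmul c n ▸ Set.Iic_add_Iio_subset _ _

end HahnSeries

open HahnSeries

namespace Abhyankar

variable (p : ℕ)

def exponent (k : ℕ) : ℚ := -((p : ℚ) ^ (-(k : ℤ)))

@[simp] theorem exponent_zero : exponent p 0 = -1 := by simp [exponent]

theorem exponent_eq_neg_one_div (k : ℕ) : exponent p k = ((-1 : ℤ) : ℚ) / (p : ℚ) ^ k := by
  simp [exponent, neg_div]

variable {p}

theorem exponent_neg (hp : 0 < p) (k : ℕ) : exponent p k < 0 :=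
  neg_neg_of_pos (zpow_pos (by exact_mod_cast hp) _)

theorem exponent_strictMono (hp : 1 < p) : StrictMono (exponent p) := fun _ _ hab =>
  neg_lt_neg (zpow_lt_zpow_right₀ (by exact_mod_cast hp) (by omega))

theorem nsmul_exponent_succ (hp : p ≠ 0) (k : ℕ) : p • exponent p (k + 1) = exponent p k := by
  rw [nsmul_eq_mul, exponent, exponent, mul_neg, ← zpow_one_add₀ (by exact_mod_cast hp)]
  push_cast
  ring_nf

theorem exists_lt_exponent (hp : 1 < p) {q : ℚ} (hq : q < 0) : ∃ n, q < exponent p n := by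
  obtain ⟨n, hn⟩ := pow_unbounded_of_one_lt (-q)⁻¹ (by exact_mod_cast hp : (1 : ℚ) < p)
  refine ⟨n, ?_⟩
  rw [exponent, zpow_neg, zpow_natCast, lt_neg]
  exact inv_lt_of_inv_lt₀ (neg_pos.2 hq) hn

variable (hp : 1 < p) (R : Type*)

section Semiring

variable [Semiring R]

noncomputable def tail (n : ℕ) : HahnSeries ℚ R where
  coeff := (exponent p '' Set.Ioi n).indicator 1
  isPWO_support' := ((Set.IsPWO.of_linearOrder _).image_of_monotone
    (exponent_strictMono hp).monotone).mono Set.support_indicator_subset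

theorem support_tail [Nontrivial R] (n : ℕ) :
    (tail hp R n).support = exponent p '' Set.Ioi n := by
  simp [tail, HahnSeries.support, Set.support_indicator]

theorem support_tail_subset_Iio_zero (n : ℕ) : (tail hp R n).support ⊆ Set.Iio 0 :=
  Set.support_indicator_subset.trans <| Set.image_subset_iff.2 fun k _ => exponent_neg (by omega) k

theorem tail_eq_single_add_tail_succ (n : ℕ) :
    tail hp R n = single (exponent p (n + 1)) 1 + tail hp R (n + 1) := by
  have h_inj := (exponent_strictMono hp).injective
  ext q
  by_cases hq : q = exponent p (n + 1)
  · subst hq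
    simp [tail, h_inj.eq_iff]
  · have h_mem : q ∈ exponent p '' Set.Ioi n ↔ q ∈ exponent p '' Set.Ioi (n + 1) := by
      refine ⟨?_, fun h => Set.image_mono (Set.Ioi_subset_Ioi n.le_succ) h⟩
      rintro ⟨k, hk, rfl⟩
      exact ⟨k, (Nat.succ_le_of_lt hk).lt_of_ne fun h => hq (h ▸ rfl), rfl⟩
    rw [coeff_add, coeff_single_of_ne hq, zero_add]
    classical
    simp only [tail, Set.indicator_apply, h_mem]

theorem exponent_succ_le_orderTop_tail (n : ℕ) :
    (exponent p (n + 1) : WithTop ℚ) ≤ (tail hp R n).orderTop := by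
  refine le_orderTop_iff_forall.2 fun q hq => Set.indicator_of_notMem ?_ _
  rintro ⟨k, hk, rfl⟩
  exact (WithTop.coe_lt_coe.1 hq).not_ge ((exponent_strictMono hp).monotone hk)

end Semiring

variable [CommRing R]

noncomputable def defect (n : ℕ) : HahnSeries ℚ R :=
  tail hp R n ^ p - tail hp R n - single (exponent p n) 1

theorem defect_succ [ExpChar R p] (n : ℕ) : defect hp R (n + 1) = defect hp R n := by
  rw [defect, defect, tail_eq_single_add_tail_succ hp R n, add_pow_expChar, single_pow, one_pow,
    nsmul_exponent_succ (by omega)]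
  abel

theorem defect_eq_defect_zero [ExpChar R p] (n : ℕ) : defect hp R n = defect hp R 0 := by
  induction n with
  | zero => rfl
  | succ n ih => rw [defect_succ, ih]

theorem exponent_le_orderTop_defect (n : ℕ) :
    (exponent p n : WithTop ℚ) ≤ (defect hp R n).orderTop := by
  have h_tail := exponent_succ_le_orderTop_tail hp R n
  have h_pow : (exponent p n : WithTop ℚ) ≤ (tail hp R n ^ p).orderTop := calc
    (exponent p n : WithTop ℚ) = p • (exponent p (n + 1) : WithTop ℚ) := by
      rw [← WithTop.coe_nsmul, nsmul_exponent_succ (by omega)]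
    _ ≤ p • (tail hp R n).orderTop := nsmul_le_nsmul_right h_tail p
    _ ≤ _ := orderTop_nsmul_le_orderTop_pow
  have h_self := (WithTop.coe_le_coe.2 ((exponent_strictMono hp).monotone n.le_succ)).trans h_tail
  calc (exponent p n : WithTop ℚ)
      ≤ min (min (tail hp R n ^ p).orderTop (tail hp R n).orderTop)
          (single (exponent p n) (1 : R)).orderTop := le_min (le_min h_pow h_self) orderTop_single_le
    _ ≤ min (tail hp R n ^ p - tail hp R n).orderTop (single (exponent p n) (1 : R)).orderTop :=
      min_le_min_right _ min_orderTop_le_orderTop_sub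
    _ ≤ _ := min_orderTop_le_orderTop_sub

theorem support_defect_subset_Iio_zero (n : ℕ) : (defect hp R n).support ⊆ Set.Iio 0 := by
  have h_tail := support_tail_subset_Iio_zero hp R n
  have h_pow : (tail hp R n ^ p).support ⊆ Set.Iio 0 := by
    simpa using support_pow_subset_Iio h_tail (n := p) (by omega)
  have h_single : (single (exponent p n) (1 : R)).support ⊆ Set.Iio 0 :=
    support_single_subset.trans <| Set.singleton_subset_iff.2 <| exponent_neg (by omega) n
  exact (support_sub_subset _ _).trans <|
    Set.union_subset ((support_sub_subset _ _).trans (Set.union_subset h_pow h_tail)) h_single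

theorem defect_zero_eq_zero [ExpChar R p] : defect hp R 0 = 0 := by
  ext q
  rcases lt_or_ge q 0 with hq | hq
  · obtain ⟨n, hn⟩ := exists_lt_exponent hp hq
    rw [← defect_eq_defect_zero hp R n]
    exact coeff_eq_zero_of_lt_orderTop
      ((WithTop.coe_lt_coe.2 hn).trans_le (exponent_le_orderTop_defect hp R n))
  · exact Function.notMem_support.1 fun h => (support_defect_subset_Iio_zero hp R 0 h).not_ge hq

theorem tail_zero_pow_sub_self [ExpChar R p] : tail hp R 0 ^ p - tail hp R 0 = single (-1) 1 := by
  rw [← sub_eq_zero, ← exponent_zero p]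
  exact defect_zero_eq_zero hp R

end Abhyankar

/-- Let `p` be a prime and let `K = 𝔽_p((t^ℚ))` be the field of Hahn
series with coefficient field `𝔽_p` and exponent group `ℚ`.  There exists `x ∈ K` whose
support equals `{-p^(-k) : k ≥ 1}` such that `x^p - x = t⁻¹`, where `t⁻¹` is the Hahn
series with a single term of exponent `-1` and coefficient `1`.  In particular the support
of `x` lies in `ℤ[1/p]`, so the Artin–Schreier equation `x^p - x = t⁻¹` has a solution in
the Hahn series field `𝔽_p((t^{1/p^∞}))` with exponents in `ℤ[1/p]`. -/
theorem artin_schreier_solution_in_hahn_series (p : ℕ) (hp : p.Prime) :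
    ∃ x : HahnSeries ℚ (ZMod p),
      x.support = {q : ℚ | ∃ k : ℕ, 1 ≤ k ∧ q = -((p : ℚ) ^ (-(k : ℤ)))} ∧
      x ^ p - x = HahnSeries.single (-1 : ℚ) (1 : ZMod p) ∧
      ∀ q ∈ x.support, ∃ m : ℤ, ∃ k : ℕ, q = (m : ℚ) / (p : ℚ) ^ k := by
  have : Fact p.Prime := ⟨hp⟩
  have h_support := Abhyankar.support_tail hp.one_lt (ZMod p) 0
  refine ⟨Abhyankar.tail hp.one_lt (ZMod p) 0, ?_,
    Abhyankar.tail_zero_pow_sub_self hp.one_lt (ZMod p), ?_⟩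
  · ext q
    simp [h_support, Abhyankar.exponent, Nat.one_le_iff_ne_zero, Nat.pos_iff_ne_zero, eq_comm]
  · rw [h_support]
    rintro _ ⟨k, -, rfl⟩
    exact ⟨-1, k, Abhyankar.exponent_eq_neg_one_div p k⟩
end

section
/- Let p be a prime, let K₀ = 𝔽_p((t)) be the field of formal Laurent series over 𝔽_p, and let ι : K₀ → P be the canonical embedding of K₀ into its perfect closure P = PerfectClosure(K₀, p) (the perfection of K₀, a perfect field of characteristic p). Then there is no element x ∈ P with x^p − x = ι(t^{−1}). -/
/-!
Raising a solution `x = mk (n, a)` to the `p^n`-th power brings the equation down to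
`a^p - a = t^(-p^n)` in `𝔽_p((t))`. Since `(a - b)^p - (a - b) = b` whenever `a^p - a = b^p`,
this descends step by step to a solution of `y^p - y = t⁻¹` in `𝔽_p((t))`, which a valuation
count rules out: `y^p - y` has order `≥ 0` if `ord y ≥ 0`, and order `p · ord y ≤ -p` otherwise.
-/

open LaurentSeries

/-- The Laurent series field `𝔽_p((t))` has characteristic `p`. -/
instance laurentSeries_charP (p : ℕ) [Fact p.Prime] :
    CharP (LaurentSeries (ZMod p)) p :=
  charP_of_injective_ringHom
    (HahnSeries.C_injective : Function.Injective (HahnSeries.C : ZMod p →+* LaurentSeries (ZMod p))) p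

namespace LaurentSeries

theorem orderTop_pow_sub_self_ne_neg_one {R : Type*} [Ring R] [NoZeroDivisors R] {n : ℕ}
    (hn : 2 ≤ n) (y : LaurentSeries R) : (y ^ n - y).orderTop ≠ -1 := by
  have horder_pow : (y ^ n).order = n * y.order := by rw [HahnSeries.order_pow, nsmul_eq_mul]
  rcases le_or_gt 0 y.order with hy | hy
  · have hpow : 0 ≤ (y ^ n).orderTop :=
      HahnSeries.zero_le_orderTop_iff.2 (by rw [horder_pow]; positivity)
    have hsub : 0 ≤ (y ^ n - y).orderTop := le_trans
      (le_min hpow (HahnSeries.zero_le_orderTop_iff.2 hy)) HahnSeries.min_orderTop_le_orderTop_sub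
    exact fun h => absurd (h ▸ hsub) (by decide)
  · have hy0 : y ≠ 0 := by rintro rfl; simp at hy
    have hlt : (y ^ n).orderTop < y.orderTop := by
      rw [← HahnSeries.order_eq_orderTop_of_ne_zero (pow_ne_zero n hy0),
        ← HahnSeries.order_eq_orderTop_of_ne_zero hy0, horder_pow]
      exact_mod_cast (by nlinarith : (n : ℤ) * y.order < y.order)
    rw [HahnSeries.orderTop_sub hlt,
      ← HahnSeries.order_eq_orderTop_of_ne_zero (pow_ne_zero n hy0), horder_pow]
    exact fun h => (by nlinarith : (n : ℤ) * y.order ≠ -1) (WithTop.coe_injective h)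

end LaurentSeries

theorem exists_pow_sub_self_eq_of_exists_eq_pow_pow {R : Type*} [CommRing R] {p : ℕ}
    [ExpChar R p] (n : ℕ) {b : R} (h : ∃ a, a ^ p - a = b ^ p ^ n) : ∃ a, a ^ p - a = b := by
  induction n generalizing b with
  | zero => simpa using h
  | succ n ih =>
    obtain ⟨a, ha⟩ := ih (b := b ^ p) (by rwa [← pow_mul, ← pow_succ'])
    exact ⟨a - b, by rw [sub_pow_expChar]; linear_combination ha⟩

theorem PerfectClosure.exists_pow_sub_self_eq_pow_of_pow_sub_self_eq_of {K : Type*} [CommRing K]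
    [IsReduced K] {p : ℕ} [Fact p.Prime] [CharP K p] {x : PerfectClosure K p} {b : K}
    (h : x ^ p - x = of K p b) : ∃ n, ∃ a : K, a ^ p - a = b ^ p ^ n := by
  obtain ⟨⟨n, a⟩, rfl⟩ := mk_surjective K p x
  refine ⟨n, a, (eq_iff K p (0, _) (0, _)).1 ?_⟩
  have := congrArg (iterateFrobenius (PerfectClosure K p) p n) h
  rwa [map_sub, map_pow, coe_iterateFrobenius, iterate_frobenius_mk, ← coe_iterateFrobenius,
    iterateFrobenius_def, ← map_pow, ← map_pow, ← map_sub] at this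

/-- Let `p` be a prime, let `K₀ = 𝔽_p((t))` be the field of formal
Laurent series over `𝔽_p`, and let `ι : K₀ → P` be the canonical embedding of `K₀` into
its perfect closure `P = PerfectClosure K₀ p`.  Then there is no element `x ∈ P` with
`x^p - x = ι(t⁻¹)`. -/
theorem artin_schreier_no_solution_in_perfect_closure (p : ℕ) [Fact p.Prime] :
    ¬ ∃ x : PerfectClosure (LaurentSeries (ZMod p)) p,
      x ^ p - x =
        PerfectClosure.of (LaurentSeries (ZMod p)) p
          (HahnSeries.single (-1 : ℤ) (1 : ZMod p)) := by
  rintro ⟨x, hx⟩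
  obtain ⟨n, hn⟩ := PerfectClosure.exists_pow_sub_self_eq_pow_of_pow_sub_self_eq_of hx
  obtain ⟨y, hy⟩ := exists_pow_sub_self_eq_of_exists_eq_pow_pow n hn
  apply orderTop_pow_sub_self_ne_neg_one (Fact.out : p.Prime).two_le y
  rw [hy, HahnSeries.orderTop_single one_ne_zero]
  rfl
end
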